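/- Let k be a commutative ring, H a bialgebra over k with comultiplication Δ (written Δ(b) = Σ b⁽¹⁾ ⊗ b⁽²⁾), and A a k-module carrying an H-module structure and a k-bilinear multiplication μ : A × A → A which is H-invariant: b·μ(x,y) = Σ μ(b⁽¹⁾·x, b⁽²⁾·y) for all b ∈ H, x, y ∈ A. Let F ∈ H ⊗ H be invertible with inverse F⁻¹ = Σ f̄ᵢ ⊗ ḡᵢ, and let Φ = Σ Φ¹ ⊗ Φ² ⊗ Φ³ ∈ H ⊗ H ⊗ H satisfy (F ⊗ 1)·(Δ ⊗ id)(F) = (1 ⊗ F)·(id ⊗ Δ)(F)·Φ. Assume μ is Φ-associative: Σ μ(Φ¹·x, μ(Φ²·y, Φ³·z)) = μ(μ(x,y), z) for all x, y, z ∈ A. Define m(x,y) = Σ μ(f̄ᵢ·x, ḡᵢ·y). Then m is an associative multiplication on A, and m is invariant under the twisted comultiplication Δ_F(b) = F·Δ(b)·F⁻¹: writing Δ_F(b) = Σ b₍₁₎ ⊗ b₍₂₎, one has b·m(x,y) = Σ m(b₍₁₎·x, b₍₂₎·y) for all b ∈ H, x, y ∈ A. -/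

import Mathlib

/-! Write `m = μ ∘ F⁻¹`. Since `F⁻¹ · Δ_F(b) = Δ(b) · F⁻¹`, invariance of `μ` under `Δ`
becomes invariance of `m` under `Δ_F`. For associativity, invariance of `μ` lets `F⁻¹` pass
through the inner product: `m ∘ (m ⊗ id)` is `μ ∘ (μ ⊗ id)` precomposed with the action of
`(Δ ⊗ id)(F⁻¹) · (F⁻¹ ⊗ 1)`, and `m ∘ (id ⊗ m)` is `μ ∘ (id ⊗ μ)` precomposed with the action
of `(id ⊗ Δ)(F⁻¹) · (1 ⊗ F⁻¹)`. Inverting the twist equation shows that these two elements of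
`H⊗³` differ exactly by the factor `Φ`, which `Φ`-associativity of `μ` absorbs. -/

open scoped TensorProduct

namespace Stmt4

variable (k : Type) [CommRing k]
variable (H : Type) [Ring H] [Bialgebra k H]
variable (A : Type) [AddCommGroup A] [Module k A]

/-- The componentwise action of `H ⊗ H` on `A ⊗ A` induced by an `H`-module
structure `ρ : H → End(A)`: an element `G = Σ G¹ ⊗ G²` sends `x ⊗ y` to
`Σ G¹·x ⊗ G²·y`. -/
noncomputable def act2 (ρ : H →ₐ[k] Module.End k A) :
    H ⊗[k] H →ₗ[k] (A ⊗[k] A →ₗ[k] A ⊗[k] A) :=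
  TensorProduct.homTensorHomMap (RingHom.id k) A A A A ∘ₗ
    TensorProduct.map ρ.toLinearMap ρ.toLinearMap

/-- The componentwise action of `H ⊗ H ⊗ H` on `A ⊗ A ⊗ A`. -/
noncomputable def act3 (ρ : H →ₐ[k] Module.End k A) :
    H ⊗[k] (H ⊗[k] H) →ₗ[k] (A ⊗[k] (A ⊗[k] A) →ₗ[k] A ⊗[k] (A ⊗[k] A)) :=
  TensorProduct.homTensorHomMap (RingHom.id k) A (A ⊗[k] A) A (A ⊗[k] A) ∘ₗ
    TensorProduct.map ρ.toLinearMap (act2 k H A ρ)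

/-- `G ⊗ 1 : H⊗² → H⊗³`, `a ⊗ b ↦ a ⊗ b ⊗ 1`. -/
noncomputable def ext12 : H ⊗[k] H →ₗ[k] H ⊗[k] (H ⊗[k] H) :=
  TensorProduct.map LinearMap.id ((TensorProduct.mk k H H).flip 1)

/-- `1 ⊗ G : H⊗² → H⊗³`, `a ⊗ b ↦ 1 ⊗ a ⊗ b`. -/
noncomputable def ext23 : H ⊗[k] H →ₗ[k] H ⊗[k] (H ⊗[k] H) :=
  TensorProduct.mk k H (H ⊗[k] H) 1

/-- `Δ ⊗ id : H⊗² → H⊗³`. -/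
noncomputable def comul12 : H ⊗[k] H →ₗ[k] H ⊗[k] (H ⊗[k] H) :=
  (TensorProduct.assoc k H H H).toLinearMap ∘ₗ
    TensorProduct.map Coalgebra.comul LinearMap.id

/-- `id ⊗ Δ : H⊗² → H⊗³`. -/
noncomputable def comul23 : H ⊗[k] H →ₗ[k] H ⊗[k] (H ⊗[k] H) :=
  TensorProduct.map LinearMap.id Coalgebra.comul

section

open TensorProduct LinearMap

variable {k H A}

lemma mul_mul_eq_of_mul_eq_mul_mul {M : Type*} [Monoid M] {a a' b b' c c' d d' Φ : M}
    (ha : a * a' = 1) (hb : b * b' = 1) (hc : c' * c = 1) (hd : d' * d = 1)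
    (h : a * b = c * d * Φ) : Φ * b' * a' = d' * c' := by
  calc Φ * b' * a' = d' * (c' * c) * d * Φ * b' * a' := by simp [hc, hd]
    _ = d' * c' * (a * b) * b' * a' := by simp only [h, mul_assoc]
    _ = d' * c' := by simp [mul_assoc, hb, ha]

variable (ρ : H →ₐ[k] Module.End k A)

@[simp]
lemma act2_tmul (a b : H) : act2 k H A ρ (a ⊗ₜ b) = map (ρ a) (ρ b) := by
  simp [act2]

@[simp]
lemma act3_tmul (a : H) (G : H ⊗[k] H) :
    act3 k H A ρ (a ⊗ₜ G) = map (ρ a) (act2 k H A ρ G) := by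
  simp [act3]

lemma act2_mul (u v : H ⊗[k] H) :
    act2 k H A ρ (u * v) = act2 k H A ρ u * act2 k H A ρ v := by
  have : act2 k H A ρ =
      (Module.endTensorEndAlgHom.comp (Algebra.TensorProduct.map ρ ρ)).toLinearMap :=
    TensorProduct.ext' fun _ _ => rfl
  simp only [this, AlgHom.toLinearMap_apply, map_mul]

lemma act3_mul (u v : H ⊗[k] (H ⊗[k] H)) :
    act3 k H A ρ (u * v) = act3 k H A ρ u * act3 k H A ρ v := by
  have : act3 k H A ρ = (Module.endTensorEndAlgHom.comp
      (Algebra.TensorProduct.map ρ (Module.endTensorEndAlgHom.comp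
        (Algebra.TensorProduct.map ρ ρ)))).toLinearMap := by
    refine TensorProduct.ext' fun a G => ?_
    induction G using TensorProduct.induction_on with
    | zero => simp
    | tmul b c => rfl
    | add u v hu hv => simp_all [TensorProduct.tmul_add]
  simp only [this, AlgHom.toLinearMap_apply, map_mul]

lemma ext12_eq_algHom : ext12 k H =
    (Algebra.TensorProduct.map (AlgHom.id k H) Algebra.TensorProduct.includeLeft).toLinearMap :=
  TensorProduct.ext' fun _ _ => rfl

lemma ext23_eq_algHom :
    ext23 k H = (Algebra.TensorProduct.includeRight (R := k) (A := H)).toLinearMap :=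
  rfl

lemma comul23_eq_algHom : comul23 k H =
    (Algebra.TensorProduct.map (AlgHom.id k H) (Bialgebra.comulAlgHom k H)).toLinearMap :=
  TensorProduct.ext' fun _ _ => rfl

lemma comul12_eq_algHom : comul12 k H = ((Algebra.TensorProduct.assoc k k k H H H).toAlgHom.comp
    (Algebra.TensorProduct.map (Bialgebra.comulAlgHom k H) (AlgHom.id k H))).toLinearMap := by
  refine TensorProduct.ext' fun a b => ?_
  simp only [comul12, LinearMap.coe_comp, LinearEquiv.coe_coe, Function.comp_apply, map_tmul,
    LinearMap.id_apply, AlgHom.toLinearMap_apply, AlgHom.comp_apply,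
    Algebra.TensorProduct.map_tmul, Bialgebra.comulAlgHom_apply, AlgHom.coe_id, id_eq]
  induction Coalgebra.comul (R := k) a using TensorProduct.induction_on with
  | zero => simp
  | tmul x y => rfl
  | add u v hu hv => simp_all [TensorProduct.add_tmul]

lemma mul_comul12_mul_ext12_eq_of_twist {F Finv : H ⊗[k] H} (hF : F * Finv = 1)
    (hF' : Finv * F = 1) {Φ : H ⊗[k] (H ⊗[k] H)}
    (htwist : ext12 k H F * comul12 k H F = ext23 k H F * comul23 k H F * Φ) :
    Φ * comul12 k H Finv * ext12 k H Finv = comul23 k H Finv * ext23 k H Finv :=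
  mul_mul_eq_of_mul_eq_mul_mul
    (by simp only [ext12_eq_algHom, AlgHom.toLinearMap_apply, ← map_mul, hF, map_one])
    (by simp only [comul12_eq_algHom, AlgHom.toLinearMap_apply, ← map_mul, hF, map_one])
    (by simp only [ext23_eq_algHom, AlgHom.toLinearMap_apply, ← map_mul, hF', map_one])
    (by simp only [comul23_eq_algHom, AlgHom.toLinearMap_apply, ← map_mul, hF', map_one]) htwist

variable (μ : A →ₗ[k] A →ₗ[k] A)

lemma act2_lTensor_lift
    (hμ : ∀ b : H, ρ b ∘ₗ lift μ = lift μ ∘ₗ act2 k H A ρ (Coalgebra.comul b))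
    (G : H ⊗[k] H) (t : A ⊗[k] (A ⊗[k] A)) :
    act2 k H A ρ G (lTensor A (lift μ) t) =
      lTensor A (lift μ) (act3 k H A ρ (comul23 k H G) t) := by
  suffices act2 k H A ρ G ∘ₗ lTensor A (lift μ) =
      lTensor A (lift μ) ∘ₗ act3 k H A ρ (comul23 k H G) from congr($this t)
  induction G using TensorProduct.induction_on with
  | zero => simp
  | tmul a b =>
    refine TensorProduct.ext_threefold' fun x y z => ?_
    simp only [comul23, act2_tmul, act3_tmul, map_comp_lTensor, lTensor_comp_map, map_tmul,
      coe_comp, Function.comp_apply, lift.tmul, id_coe, id_eq]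
    congr 1
    exact LinearMap.congr_fun (hμ b) (y ⊗ₜ z)
  | add u v hu hv => simp only [map_add, add_comp, comp_add, hu, hv]

lemma act2_rTensor_lift
    (hμ : ∀ b : H, ρ b ∘ₗ lift μ = lift μ ∘ₗ act2 k H A ρ (Coalgebra.comul b))
    (G : H ⊗[k] H) (t : A ⊗[k] (A ⊗[k] A)) :
    act2 k H A ρ G (rTensor A (lift μ) ((TensorProduct.assoc k A A A).symm t)) =
      rTensor A (lift μ)
        ((TensorProduct.assoc k A A A).symm (act3 k H A ρ (comul12 k H G) t)) := by
  suffices act2 k H A ρ G ∘ₗ rTensor A (lift μ) ∘ₗ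
      (TensorProduct.assoc k A A A).symm.toLinearMap =
      rTensor A (lift μ) ∘ₗ (TensorProduct.assoc k A A A).symm.toLinearMap ∘ₗ
        act3 k H A ρ (comul12 k H G) from congr($this t)
  induction G using TensorProduct.induction_on with
  | zero => simp
  | tmul a b =>
    refine TensorProduct.ext_threefold' fun x y z => ?_
    simp only [comul12, act2_tmul, coe_comp, LinearEquiv.coe_coe, Function.comp_apply,
      assoc_symm_tmul, rTensor_tmul, lift.tmul, map_tmul, id_coe, id_eq]
    rw [show ρ a (μ x y) = lift μ (act2 k H A ρ (Coalgebra.comul a) (x ⊗ₜ y)) from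
      LinearMap.congr_fun (hμ a) (x ⊗ₜ y)]
    induction Coalgebra.comul (R := k) a using TensorProduct.induction_on with
    | zero => simp
    | tmul p q => simp
    | add u v hu hv => simp_all [add_tmul]
  | add u v hu hv => simp only [map_add, add_comp, comp_add, hu, hv]

lemma assoc_symm_act3_ext12 (G : H ⊗[k] H) (t : A ⊗[k] (A ⊗[k] A)) :
    (TensorProduct.assoc k A A A).symm (act3 k H A ρ (ext12 k H G) t) =
      rTensor A (act2 k H A ρ G) ((TensorProduct.assoc k A A A).symm t) := by
  suffices (TensorProduct.assoc k A A A).symm.toLinearMap ∘ₗ act3 k H A ρ (ext12 k H G) =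
      rTensor A (act2 k H A ρ G) ∘ₗ (TensorProduct.assoc k A A A).symm.toLinearMap
    from congr($this t)
  induction G using TensorProduct.induction_on with
  | zero => simp
  | tmul a b =>
    refine TensorProduct.ext_threefold' fun x y z => ?_
    simp [ext12]
  | add u v hu hv => simp only [map_add, add_comp, comp_add, hu, hv, rTensor_add]

lemma act3_ext23 (G : H ⊗[k] H) :
    act3 k H A ρ (ext23 k H G) = lTensor A (act2 k H A ρ G) := by
  simp only [ext23, mk_apply, act3_tmul, map_one]
  rfl

noncomputable def twistedMul (G : H ⊗[k] H) : A ⊗[k] A →ₗ[k] A :=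
  lift μ ∘ₗ act2 k H A ρ G

lemma twistedMul_assoc
    (hμ : ∀ b : H, ρ b ∘ₗ lift μ = lift μ ∘ₗ act2 k H A ρ (Coalgebra.comul b))
    {G : H ⊗[k] H} {Φ : H ⊗[k] (H ⊗[k] H)}
    (hG : Φ * comul12 k H G * ext12 k H G = comul23 k H G * ext23 k H G)
    (hΦ : ∀ x y z : A, (lift μ ∘ₗ lTensor A (lift μ)) (act3 k H A ρ Φ (x ⊗ₜ (y ⊗ₜ z))) =
      μ (μ x y) z)
    (x y z : A) :
    twistedMul ρ μ G (twistedMul ρ μ G (x ⊗ₜ y) ⊗ₜ z) =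
      twistedMul ρ μ G (x ⊗ₜ twistedMul ρ μ G (y ⊗ₜ z)) := by
  have hΦ_map : lift μ ∘ₗ rTensor A (lift μ) ∘ₗ
      (TensorProduct.assoc k A A A).symm.toLinearMap =
      lift μ ∘ₗ lTensor A (lift μ) ∘ₗ act3 k H A ρ Φ :=
    TensorProduct.ext_threefold' fun x y z => by simpa using (hΦ x y z).symm
  set t := x ⊗ₜ[k] (y ⊗ₜ[k] z)
  calc twistedMul ρ μ G (twistedMul ρ μ G (x ⊗ₜ y) ⊗ₜ z)
      = lift μ (act2 k H A ρ G (rTensor A (lift μ)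
          ((TensorProduct.assoc k A A A).symm (act3 k H A ρ (ext12 k H G) t)))) := by
        simp [twistedMul, assoc_symm_act3_ext12, t]
    _ = lift μ (rTensor A (lift μ) ((TensorProduct.assoc k A A A).symm
          (act3 k H A ρ (comul12 k H G) (act3 k H A ρ (ext12 k H G) t)))) := by
        rw [act2_rTensor_lift ρ μ hμ]
    _ = lift μ (lTensor A (lift μ) (act3 k H A ρ (Φ * comul12 k H G * ext12 k H G) t)) := by
        rw [act3_mul, act3_mul]
        exact congr($hΦ_map _)
    _ = lift μ (lTensor A (lift μ)
          (act3 k H A ρ (comul23 k H G) (act3 k H A ρ (ext23 k H G) t))) := by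
        rw [hG, act3_mul]; rfl
    _ = twistedMul ρ μ G (x ⊗ₜ twistedMul ρ μ G (y ⊗ₜ z)) := by
        rw [← act2_lTensor_lift ρ μ hμ, act3_ext23]
        simp [twistedMul, t]

lemma comp_twistedMul
    (hμ : ∀ b : H, ρ b ∘ₗ lift μ = lift μ ∘ₗ act2 k H A ρ (Coalgebra.comul b))
    {F G : H ⊗[k] H} (hGF : G * F = 1) (b : H) :
    ρ b ∘ₗ twistedMul ρ μ G =
      twistedMul ρ μ G ∘ₗ act2 k H A ρ (F * Coalgebra.comul b * G) := by
  calc ρ b ∘ₗ twistedMul ρ μ G = lift μ ∘ₗ act2 k H A ρ (Coalgebra.comul b * G) := by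
        rw [twistedMul, ← comp_assoc, hμ, act2_mul, Module.End.mul_eq_comp, comp_assoc]
    _ = twistedMul ρ μ G ∘ₗ act2 k H A ρ (F * Coalgebra.comul b * G) := by
        rw [twistedMul, comp_assoc, ← Module.End.mul_eq_comp, ← act2_mul, ← mul_assoc,
          ← mul_assoc, hGF, one_mul]

end

theorem twist_of_Phi_associative
    (ρ : H →ₐ[k] Module.End k A) (μ : A →ₗ[k] A →ₗ[k] A)
    (hinv : ∀ b : H,
      ρ b ∘ₗ TensorProduct.lift μ =
        TensorProduct.lift μ ∘ₗ act2 k H A ρ (Coalgebra.comul b))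
    (F Finv : H ⊗[k] H) (hF : F * Finv = 1) (hF' : Finv * F = 1)
    (Φ : H ⊗[k] (H ⊗[k] H))
    (htwist : ext12 k H F * comul12 k H F = ext23 k H F * comul23 k H F * Φ)
    (hΦassoc : ∀ x y z : A,
      (TensorProduct.lift μ ∘ₗ TensorProduct.map LinearMap.id (TensorProduct.lift μ))
          (act3 k H A ρ Φ (x ⊗ₜ[k] (y ⊗ₜ[k] z))) = μ (μ x y) z) :
    (∀ x y z : A,
      (fun a b => TensorProduct.lift μ (act2 k H A ρ Finv (a ⊗ₜ[k] b)))
          ((fun a b => TensorProduct.lift μ (act2 k H A ρ Finv (a ⊗ₜ[k] b))) x y) z =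
      (fun a b => TensorProduct.lift μ (act2 k H A ρ Finv (a ⊗ₜ[k] b))) x
          ((fun a b => TensorProduct.lift μ (act2 k H A ρ Finv (a ⊗ₜ[k] b))) y z)) ∧
    (∀ b : H,
      ρ b ∘ₗ (TensorProduct.lift μ ∘ₗ act2 k H A ρ Finv) =
        (TensorProduct.lift μ ∘ₗ act2 k H A ρ Finv) ∘ₗ
          act2 k H A ρ (F * Coalgebra.comul b * Finv)) :=
  ⟨twistedMul_assoc ρ μ hinv (mul_comul12_mul_ext12_eq_of_twist hF hF' htwist) hΦassoc,
    comp_twistedMul ρ μ hinv hF'⟩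

end Stmt4
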